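/- arXiv:1402.0773 — 3 statements merged into one kernel-verified Lean document; each statement's English description precedes it below -/
import Mathlib

section
/- Let 𝒰 be a linear functional on polynomials, σ and τ polynomials, and ω ∈ ℂ \ {0}. Then D_ω(σ(x)𝒰) = τ(x)𝒰 holds if and only if D_{-ω}(σ̃(x)𝒰) = τ(x)𝒰 holds, where σ̃(x) = σ(x) + ω·τ(x). -/
open Polynomial Finset

noncomputable def Dw (ω : ℂ) : Polynomial ℂ →ₗ[ℂ] Polynomial ℂ where
  toFun p := C ω⁻¹ * (p.comp (X + C ω) - p)
  map_add' p r := by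
    ext n
    simp [add_comp, coeff_C_mul, coeff_sub, coeff_add]
    ring
  map_smul' c p := by
    ext n
    simp [smul_comp, coeff_C_mul, coeff_smul, coeff_sub, smul_eq_mul]
    ring

noncomputable def Dq (q : ℂ) : Polynomial ℂ →ₗ[ℂ] Polynomial ℂ where
  toFun p := C (q-1)⁻¹ * (p.comp (C q * X) - p).divX
  map_add' p r := by
    ext n
    simp [add_comp, coeff_divX, coeff_C_mul, coeff_sub, coeff_add]
    ring
  map_smul' c p := by
    ext n
    simp [smul_comp, coeff_divX, coeff_C_mul, coeff_smul, coeff_sub, smul_eq_mul]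
    ring

noncomputable def mulF (π : Polynomial ℂ) (U : Polynomial ℂ →ₗ[ℂ] ℂ) : Polynomial ℂ →ₗ[ℂ] ℂ :=
  U ∘ₗ (LinearMap.mulLeft ℂ π)

noncomputable def DwF (ω : ℂ) (U : Polynomial ℂ →ₗ[ℂ] ℂ) : Polynomial ℂ →ₗ[ℂ] ℂ :=
  -(U ∘ₗ Dw (-ω))

noncomputable def DqF (q : ℂ) (U : Polynomial ℂ →ₗ[ℂ] ℂ) : Polynomial ℂ →ₗ[ℂ] ℂ :=
  -(U ∘ₗ Dq q⁻¹)


lemma Dw_apply (ω : ℂ) (p : Polynomial ℂ) :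
    Dw ω p = C ω⁻¹ * (p.comp (X + C ω) - p) := rfl

lemma key1 (ω : ℂ) (hω : ω ≠ 0) (p : Polynomial ℂ) :
    Dw (-ω) (p.comp (X + C ω)) = Dw ω p := by
  simp only [Dw_apply]
  rw [comp_assoc]
  have h1 : (X + C ω).comp (X + C (-ω)) = X := by
    simp [add_comp]
  rw [h1, comp_X]
  rw [show (-ω)⁻¹ = -ω⁻¹ by field_simp]
  simp only [map_neg]
  ring

lemma key2 (ω : ℂ) (hω : ω ≠ 0) (p : Polynomial ℂ) :
    p.comp (X + C ω) = p + C ω * Dw ω p := by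
  rw [Dw_apply, ← mul_assoc, ← C_mul, mul_inv_cancel₀ hω, C_1]
  ring

/-- D_ω(σ𝒰) = τ𝒰 if and only if D_{-ω}(σ̃𝒰) = τ𝒰, where σ̃ = σ + ωτ. -/
theorem stmt6 (ω : ℂ) (hω : ω ≠ 0) (U : Polynomial ℂ →ₗ[ℂ] ℂ) (σ τ : Polynomial ℂ) :
    DwF ω (mulF σ U) = mulF τ U ↔ DwF (-ω) (mulF (σ + C ω * τ) U) = mulF τ U := by
  rw [LinearMap.ext_iff, LinearMap.ext_iff]
  have unf : ∀ (ν : ℂ) (π : Polynomial ℂ) (p : Polynomial ℂ),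
      DwF ν (mulF π U) p = -(U (π * Dw (-ν) p)) := by
    intro ν π p
    simp [DwF, mulF, LinearMap.mulLeft_apply]
  have smul' : ∀ x : Polynomial ℂ, U (C ω * x) = ω * U x := by
    intro x
    rw [← smul_eq_C_mul, map_smul, smul_eq_mul]
  simp only [unf, neg_neg]
  simp only [mulF, LinearMap.comp_apply, LinearMap.mulLeft_apply]
  constructor
  · intro h p
    have h1 := h (p.comp (X + C ω))
    rw [key1 ω hω, key2 ω hω] at h1
    have e1 : τ * (p + C ω * Dw ω p) = τ * p + C ω * (τ * Dw ω p) := by ring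
    rw [e1, map_add, smul'] at h1
    have e2 : (σ + C ω * τ) * Dw ω p = σ * Dw ω p + C ω * (τ * Dw ω p) := by ring
    rw [e2, map_add, smul']
    linear_combination h1
  · intro h p
    have h1 := h (p.comp (X + C (-ω)))
    have k1 := key1 (-ω) (neg_ne_zero.mpr hω) p
    rw [neg_neg] at k1
    rw [k1, key2 (-ω) (neg_ne_zero.mpr hω) p] at h1
    have e2 : (σ + C ω * τ) * Dw (-ω) p = σ * Dw (-ω) p + C ω * (τ * Dw (-ω) p) := by ring
    rw [e2, map_add, smul'] at h1
    have e1 : τ * (p + C (-ω) * Dw (-ω) p) = τ * p + (-1 : ℂ) • (C ω * (τ * Dw (-ω) p)) := by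
      simp only [map_neg, smul_eq_C_mul, map_one]
      ring
    rw [e1, map_add, map_smul, smul'] at h1
    rw [neg_one_smul] at h1
    linear_combination h1
end

section
/- Suppose 𝒰 and 𝒱 are linear functionals on polynomials related by p(x)𝒰 = r(x)𝒱 for nonzero polynomials p, r, and suppose D_q(σ(x)𝒰) = τ(x)𝒰. Then D_q(p(q^{-1}x)σ(x)r(x)𝒱) = (p(qx)τ(x) + q·D_q[p(x)+p(q^{-1}x)]·σ(x))·r(x)𝒱. -/
open Polynomial Finset

lemma X_mul_Dq (q : ℂ) (h : Polynomial ℂ) :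
    X * Dq q h = C (q-1)⁻¹ * (h.comp (C q * X) - h) := by
  have h0 : (h.comp (C q * X) - h).coeff 0 = 0 := by
    simp [coeff_zero_eq_eval_zero, eval_comp]
  have hd := X_mul_divX_add (h.comp (C q * X) - h)
  rw [h0, map_zero, add_zero] at hd
  show X * (C (q-1)⁻¹ * (h.comp (C q * X) - h).divX) = _
  rw [mul_left_comm, hd]

lemma keyDq (q : ℂ) (hq0 : q ≠ 0) (hq1 : q ≠ 1) (p f : Polynomial ℂ) :
    Dq q⁻¹ (p.comp (C q * X) * p * f) =
      p * p.comp (C q⁻¹ * X) * Dq q⁻¹ f +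
        C q * Dq q (p + p.comp (C q⁻¹ * X)) * p * f := by
  have hq1' : q - 1 ≠ 0 := sub_ne_zero.mpr hq1
  have hcomp : (C q⁻¹ * X).comp (C q * X) = X := by
    rw [mul_comp, C_comp, X_comp, ← mul_assoc, ← C_mul, inv_mul_cancel₀ hq0, C_1, one_mul]
  have hcomp' : (C q * X).comp (C q⁻¹ * X) = X := by
    rw [mul_comp, C_comp, X_comp, ← mul_assoc, ← C_mul, mul_inv_cancel₀ hq0, C_1, one_mul]
  have c1 : (p.comp (C q * X)).comp (C q⁻¹ * X) = p := by
    rw [comp_assoc, hcomp', comp_X]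
  have c2 : (p.comp (C q⁻¹ * X)).comp (C q * X) = p := by
    rw [comp_assoc, hcomp, comp_X]
  have hc : ((q⁻¹ - 1 : ℂ))⁻¹ = -(q * (q-1)⁻¹) := by
    have h1q : (1:ℂ) - q ≠ 0 := sub_ne_zero.mpr (Ne.symm hq1)
    field_simp
    ring
  apply mul_left_cancel₀ (X_ne_zero (R := ℂ))
  have h1 := X_mul_Dq q⁻¹ (p.comp (C q * X) * p * f)
  have h2 := X_mul_Dq q⁻¹ f
  have h3 := X_mul_Dq q (p + p.comp (C q⁻¹ * X))
  have e1 : X * (p * p.comp (C q⁻¹ * X) * Dq q⁻¹ f +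
      C q * Dq q (p + p.comp (C q⁻¹ * X)) * p * f) =
      p * p.comp (C q⁻¹ * X) * (X * Dq q⁻¹ f) +
        C q * (X * Dq q (p + p.comp (C q⁻¹ * X))) * p * f := by ring
  rw [e1, h1, h2, h3, mul_comp, mul_comp, c1, add_comp, c2]
  rw [hc, map_neg, map_mul]
  ring

/-- if p𝒰 = r𝒱 and D_q(σ𝒰) = τ𝒰, then
D_q(p(q⁻¹x)σ(x)r(x)𝒱) = (p(qx)τ(x) + q·D_q[p(x)+p(q⁻¹x)]σ(x))·r(x)𝒱. -/
theorem stmt9 (q : ℂ) (hq0 : q ≠ 0) (hq1 : q ≠ 1) (hqm1 : q ≠ -1)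
    (U V : Polynomial ℂ →ₗ[ℂ] ℂ) (p r σ τ : Polynomial ℂ) (hp : p ≠ 0) (hr : r ≠ 0)
    (hUV : mulF p U = mulF r V) (hsemi : DqF q (mulF σ U) = mulF τ U) :
    DqF q (mulF (p.comp (C q⁻¹ * X) * σ * r) V) =
      mulF ((p.comp (C q * X) * τ + C q * Dq q (p + p.comp (C q⁻¹ * X)) * σ) * r) V := by
  have hU : ∀ g, U (p * g) = V (r * g) := fun g => by
    have := DFunLike.congr_fun hUV g
    simpa [mulF] using this
  have hS : ∀ g, -(U (σ * (Dq q⁻¹ g))) = U (τ * g) := fun g => by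
    have := DFunLike.congr_fun hsemi g
    simpa [DqF, mulF] using this
  refine LinearMap.ext fun f => ?_
  simp only [DqF, mulF, LinearMap.neg_apply, LinearMap.comp_apply, LinearMap.mulLeft_apply]
  rw [show p.comp (C q⁻¹ * X) * σ * r * (Dq q⁻¹ f) =
      r * (p.comp (C q⁻¹ * X) * σ * Dq q⁻¹ f) from by ring]
  rw [show (p.comp (C q * X) * τ + C q * Dq q (p + p.comp (C q⁻¹ * X)) * σ) * r * f =
      r * ((p.comp (C q * X) * τ + C q * Dq q (p + p.comp (C q⁻¹ * X)) * σ) * f) from by ring]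
  rw [← hU, ← hU]
  rw [show p * ((p.comp (C q * X) * τ + C q * Dq q (p + p.comp (C q⁻¹ * X)) * σ) * f) =
      τ * (p.comp (C q * X) * p * f) + σ * (C q * Dq q (p + p.comp (C q⁻¹ * X)) * p * f)
      from by ring]
  rw [map_add, ← hS (p.comp (C q * X) * p * f), keyDq q hq0 hq1 p f]
  rw [mul_add, map_add]
  rw [show p * (p.comp (C q⁻¹ * X) * σ * Dq q⁻¹ f) =
      σ * (p * p.comp (C q⁻¹ * X) * Dq q⁻¹ f) from by ring]
  ring
end

section
/- Let {P_n} and {Q_n} be the monic OPS of regular functionals 𝒰 and 𝒱, related by φ(x)𝒰 = ρ(x)𝒱 with deg φ = ȷ and deg ρ = r. Then for every n ≥ r, φ(x)·Q_n(x) = Σ_{i=n-r}^{n+ȷ} ξ_i P_i(x) for some constants ξ_i; that is, the Fourier coefficients of φ·Q_n relative to {P_i} vanish for i ≤ n - r - 1. -/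
open Polynomial Finset

/-!
Expand `φ Qₙ` in the basis `{Pᵢ}`; its `i`-th Fourier coefficient is
`⟨𝒰, φ Qₙ Pᵢ⟩ / ⟨𝒰, Pᵢ²⟩`. Moving `φ` onto the functional turns the numerator into
`⟨𝒱, Qₙ · ρ Pᵢ⟩`, which vanishes by orthogonality of `Qₙ` as soon as `deg (ρ Pᵢ) = r + i < n`.
-/

lemma mulF_apply (π : Polynomial ℂ) (U : Polynomial ℂ →ₗ[ℂ] ℂ) (p : Polynomial ℂ) :
    mulF π U p = U (π * p) :=
  rfl

lemma Finset.sum_range_succ_eq_sum_Icc_of_eq_zero {M : Type*} [AddCommMonoid M] {f : ℕ → M}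
    {a N : ℕ} (hf : ∀ i < a, f i = 0) :
    ∑ i ∈ range (N + 1), f i = ∑ i ∈ Icc a N, f i := by
  refine (sum_subset (fun i hi ↦ ?_) fun i hi hi' ↦ hf i ?_).symm
  · simp only [mem_Icc] at hi
    simp only [mem_range]
    omega
  · simp only [mem_range, mem_Icc] at hi hi'
    omega

section OrthogonalSequence

variable {R : Type*} [CommRing R] {P : ℕ → R[X]}

lemma exists_eq_sum_range_smul_of_natDegree_le [Nontrivial R] (hmonic : ∀ n, (P n).Monic)
    (hdeg : ∀ n, (P n).natDegree = n) {p : R[X]} {N : ℕ} (hp : p.natDegree ≤ N) :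
    ∃ c : ℕ → R, p = ∑ i ∈ range (N + 1), c i • P i := by
  let S : Sequence R := ⟨P, fun n ↦ by rw [degree_eq_natDegree (hmonic n).ne_zero, hdeg]⟩
  have hspan : p ∈ Submodule.span R (P '' ↑(range (N + 1))) := by
    rw [coe_range, S.span_degreeLT fun i _ ↦ (hmonic i).leadingCoeff ▸ isUnit_one, mem_degreeLT]
    exact (degree_le_natDegree.trans (WithBot.coe_le_coe.2 hp)).trans_lt
      (WithBot.coe_lt_coe.2 N.lt_succ_self)
  obtain ⟨c, hc⟩ := (Submodule.mem_span_image_finset_iff_exists_fun' R).1 hspan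
  exact ⟨c, hc.symm⟩

variable (U : R[X] →ₗ[R] R) (hPorth : ∀ n k, n ≠ k → U (P n * P k) = 0)
include hPorth

lemma apply_sum_smul_mul_eq (c : ℕ → R) {M k : ℕ} (hk : k < M) :
    U ((∑ i ∈ range M, c i • P i) * P k) = c k * U (P k * P k) := by
  rw [sum_mul, map_sum, sum_eq_single_of_mem k (mem_range.2 hk) fun i _ hik ↦ by
    rw [smul_mul_assoc, map_smul, hPorth i k hik, smul_zero]]
  rw [smul_mul_assoc, map_smul, smul_eq_mul]

lemma apply_mul_eq_zero_of_natDegree_lt [Nontrivial R] (hmonic : ∀ n, (P n).Monic)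
    (hdeg : ∀ n, (P n).natDegree = n) {p : R[X]} {n : ℕ} (hp : p.natDegree < n) :
    U (P n * p) = 0 := by
  obtain ⟨c, hc⟩ := exists_eq_sum_range_smul_of_natDegree_le hmonic hdeg (le_refl p.natDegree)
  rw [hc, mul_sum, map_sum]
  refine sum_eq_zero fun i hi ↦ ?_
  rw [mul_smul_comm, map_smul, hPorth n i (by rw [mem_range] at hi; omega), smul_zero]

end OrthogonalSequence

theorem stmt17_general (U V : Polynomial ℂ →ₗ[ℂ] ℂ) (P Q : ℕ → Polynomial ℂ)
    (hPmonic : ∀ n, (P n).Monic) (hPdeg : ∀ n, (P n).natDegree = n)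
    (hPorth : ∀ n k, n ≠ k → U (P n * P k) = 0) (hPreg : ∀ n, U (P n * P n) ≠ 0)
    (hQmonic : ∀ n, (Q n).Monic) (hQdeg : ∀ n, (Q n).natDegree = n)
    (hQorth : ∀ n k, n ≠ k → V (Q n * Q k) = 0)
    (φ ρ : Polynomial ℂ) (jdeg rdeg : ℕ)
    (hφdeg : φ.natDegree = jdeg) (hρdeg : ρ.natDegree = rdeg)
    (hUV : mulF φ U = mulF ρ V) :
    ∀ n : ℕ, rdeg ≤ n → ∃ ξ : ℕ → ℂ,
      φ * Q n = ∑ i ∈ Finset.Icc (n - rdeg) (n + jdeg), ξ i • P i := by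
  intro n _
  obtain ⟨c, hc⟩ := exists_eq_sum_range_smul_of_natDegree_le hPmonic hPdeg
    (natDegree_mul_le.trans (by rw [hφdeg, hQdeg, add_comm]) : (φ * Q n).natDegree ≤ n + jdeg)
  have hlow : ∀ i < n - rdeg, c i • P i = 0 := fun i hi ↦ by
    have hρP : (ρ * P i).natDegree < n :=
      natDegree_mul_le.trans_lt (by rw [hρdeg, hPdeg]; omega)
    have hcoeff : c i * U (P i * P i) = 0 := calc
      c i * U (P i * P i) = U (φ * (Q n * P i)) := by
        rw [← mul_assoc, hc, apply_sum_smul_mul_eq U hPorth c (by omega)]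
      _ = V (Q n * (ρ * P i)) := by rw [← mulF_apply, hUV, mulF_apply, mul_left_comm]
      _ = 0 := apply_mul_eq_zero_of_natDegree_lt V hQorth hQmonic hQdeg hρP
    rw [(mul_eq_zero.1 hcoeff).resolve_right (hPreg i), zero_smul]
  exact ⟨c, hc.trans (sum_range_succ_eq_sum_Icc_of_eq_zero hlow)⟩

/-- if the regular functionals 𝒰, 𝒱 with monic OPS {Pₙ}, {Qₙ} satisfy
φ𝒰 = ρ𝒱 with deg φ = j and deg ρ = r, then for every n ≥ r,
φ·Qₙ = Σ_{i=n-r}^{n+j} ξᵢ Pᵢ for some constants ξᵢ. -/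
theorem stmt17 (U V : Polynomial ℂ →ₗ[ℂ] ℂ) (P Q : ℕ → Polynomial ℂ)
    (hPmonic : ∀ n, (P n).Monic) (hPdeg : ∀ n, (P n).natDegree = n)
    (hPorth : ∀ n k, n ≠ k → U (P n * P k) = 0) (hPreg : ∀ n, U (P n * P n) ≠ 0)
    (hQmonic : ∀ n, (Q n).Monic) (hQdeg : ∀ n, (Q n).natDegree = n)
    (hQorth : ∀ n k, n ≠ k → V (Q n * Q k) = 0) (hQreg : ∀ n, V (Q n * Q n) ≠ 0)
    (φ ρ : Polynomial ℂ) (hφ : φ ≠ 0) (hρ : ρ ≠ 0) (jdeg rdeg : ℕ)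
    (hφdeg : φ.natDegree = jdeg) (hρdeg : ρ.natDegree = rdeg)
    (hUV : mulF φ U = mulF ρ V) :
    ∀ n : ℕ, rdeg ≤ n → ∃ ξ : ℕ → ℂ,
      φ * Q n = ∑ i ∈ Finset.Icc (n - rdeg) (n + jdeg), ξ i • P i :=
  stmt17_general U V P Q hPmonic hPdeg hPorth hPreg hQmonic hQdeg hQorth φ ρ jdeg rdeg hφdeg hρdeg
    hUV
end
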